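/- arXiv:1901.09618 — 3 statements merged into one kernel-verified Lean document; each statement's English description precedes it below -/
import Mathlib

section
/- Let A be a unital C*-algebra with unit 1, and let f be a hermitian continuous linear functional on A. Then ‖f‖ = r_1(f), i.e. the norm of f equals inf { f₁(1) + f₂(1) : f = f₁ − f₂ with f₁, f₂ positive continuous linear functionals on A }. -/
open scoped ComplexOrder NNReal

variable {A : Type*} [CStarAlgebra A] [PartialOrder A] [StarOrderedRing A]

/-- A continuous linear functional on a C*-algebra is positive if it is nonnegative on
positive elements (using the complex order). -/
def IsPosFunctional {A : Type*} [CStarAlgebra A] [PartialOrder A] [StarOrderedRing A]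
    (f : A →L[ℂ] ℂ) : Prop :=
  ∀ x : A, 0 ≤ x → 0 ≤ f x

/-- A continuous linear functional is hermitian if `f (star x) = conj (f x)` for all `x`. -/
def IsHermitianFunctional {A : Type*} [CStarAlgebra A] (f : A →L[ℂ] ℂ) : Prop :=
  ∀ x : A, f (star x) = starRingEnd ℂ (f x)

/-- The seminorm `r_a` associated with a positive element `a`:
`r_a(f) = inf { f₁(a) + f₂(a) | f = f₁ - f₂, f₁, f₂ positive }`. -/
noncomputable def rSeminorm {A : Type*} [CStarAlgebra A] [PartialOrder A] [StarOrderedRing A]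
    (a : A) (f : A →L[ℂ] ℂ) : ℝ :=
  sInf { r : ℝ | ∃ f₁ f₂ : A →L[ℂ] ℂ, IsPosFunctional f₁ ∧ IsPosFunctional f₂ ∧
    f = f₁ - f₂ ∧ (r : ℂ) = f₁ a + f₂ a }

/-!
A positive functional `g` has norm `g 1`, which gives `‖f‖ ≤ r₁(f)`. For the converse we need a
Jordan decomposition `f = f₁ - f₂` with `f₁ 1 + f₂ 1 = ‖f‖`; equivalently, a real functional
`φ = f₁ + f₂` with `φ ≥ ±f` on positive elements and `φ 1 ≤ ‖f‖`. Such a `φ` satisfies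
`φ x ≤ ‖f‖ t - Re f j` whenever `ℜ x + k ≤ t • 1` and `-k ≤ j ≤ k`, since
`φ k - f j = f₁ (k - j) + f₂ (k + j) ≥ 0`. The infimum of these bounds is sublinear, so
Hahn–Banach produces a `φ` below it, and that `φ` has the required properties.
-/

open scoped ComplexOrder ComplexStarModule Pointwise

lemma norm_le_of_neg_algebraMap_le_of_le_algebraMap {a : A} {s : ℝ} (hs : 0 ≤ s)
    (h₁ : -algebraMap ℝ A s ≤ a) (h₂ : a ≤ algebraMap ℝ A s) : ‖a‖ ≤ s := by
  rcases subsingleton_or_nontrivial A with _ | _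
  · simpa [Subsingleton.elim a 0] using hs
  have ha : IsSelfAdjoint a := by
    simpa using (IsSelfAdjoint.algebraMap A (.all s)).sub (.of_nonneg (sub_nonneg.2 h₂))
  rcases CStarAlgebra.norm_or_neg_norm_mem_spectrum ha with h | h
  · exact (le_algebraMap_iff_spectrum_le ha).1 h₂ _ h
  · have := (algebraMap_le_iff_le_spectrum ha).1 (by rwa [map_neg]) _ h
    linarith

lemma IsHermitianFunctional.ofReal_re_apply {A : Type*} [CStarAlgebra A] {f : A →L[ℂ] ℂ}
    (hf : IsHermitianFunctional f) {h : A} (hh : IsSelfAdjoint h) : ((f h).re : ℂ) = f h :=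
  Complex.conj_eq_iff_re.1 (by rw [← hf, hh.star_eq])

namespace IsPosFunctional

variable {g : A →L[ℂ] ℂ}

lemma apply_le_norm_mul_apply_one (hg : IsPosFunctional g) {h : A} (hh : IsSelfAdjoint h) :
    g h ≤ ‖h‖ * g 1 := by
  have := hg _ (sub_nonneg.2 hh.le_algebraMap_norm_self)
  rwa [map_sub, Algebra.algebraMap_eq_smul_one, ← Complex.coe_smul, map_smul, smul_eq_mul,
    sub_nonneg] at this

lemma im_apply_eq_zero (hg : IsPosFunctional g) {h : A} (hh : IsSelfAdjoint h) :
    (g h).im = 0 := by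
  have h₁ := (Complex.le_def.1 (hg.apply_le_norm_mul_apply_one hh)).2
  have h₀ := (Complex.le_def.1 (hg 1 zero_le_one)).2
  simp [h₁, ← h₀]

lemma abs_re_apply_le (hg : IsPosFunctional g) {h : A} (hh : IsSelfAdjoint h) :
    |(g h).re| ≤ ‖h‖ * (g 1).re := by
  have h₁ := (Complex.le_def.1 (hg.apply_le_norm_mul_apply_one hh)).1
  have h₂ := (Complex.le_def.1 (hg.apply_le_norm_mul_apply_one hh.neg)).1
  simp only [map_neg, Complex.neg_re, norm_neg, Complex.re_ofReal_mul] at h₁ h₂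
  exact abs_le.2 ⟨by linarith, h₁⟩

lemma re_apply_realPart (hg : IsPosFunctional g) (x : A) : (g (ℜ x)).re = (g x).re := by
  conv_rhs => rw [← realPart_add_I_smul_imaginaryPart x]
  simp [hg.im_apply_eq_zero (ℑ x).2]

/-- The norm of `g` is that of its real part `Re ∘ g`, which is controlled on `ℜ x`. -/
lemma norm_le (hg : IsPosFunctional g) : (‖g‖ : ℂ) ≤ g 1 := by
  have h₀ := hg 1 zero_le_one
  have h₀' : 0 ≤ (g 1).re := by simpa using (Complex.le_def.1 h₀).1
  rw [Complex.eq_re_of_ofReal_le (r := 0) (z := g 1) (by simpa using h₀), Complex.real_le_real,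
    ← (StrongDual.extendRCLikeₗᵢ (𝕜 := ℂ)).symm.norm_map g]
  refine ContinuousLinearMap.opNorm_le_bound _ h₀' fun x ↦ ?_
  calc |(g x).re| = |(g (ℜ x)).re| := by rw [hg.re_apply_realPart]
    _ ≤ ‖(ℜ x : A)‖ * (g 1).re := hg.abs_re_apply_le (ℜ x).2
    _ ≤ (g 1).re * ‖x‖ := by rw [mul_comm]; gcongr; exact realPart.norm_le x

end IsPosFunctional

lemma norm_sub_le_apply_one_add {f₁ f₂ : A →L[ℂ] ℂ} (h₁ : IsPosFunctional f₁)
    (h₂ : IsPosFunctional f₂) : (‖f₁ - f₂‖ : ℂ) ≤ f₁ 1 + f₂ 1 :=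
  calc (‖f₁ - f₂‖ : ℂ) ≤ ‖f₁‖ + ‖f₂‖ := mod_cast norm_sub_le f₁ f₂
    _ ≤ f₁ 1 + f₂ 1 := add_le_add h₁.norm_le h₂.norm_le

namespace JordanDecomposition

def majorantValues (f : A →L[ℂ] ℂ) (x : A) : Set ℝ :=
  {r | ∃ t : ℝ, 0 ≤ t ∧ ∃ j k : A, -k ≤ j ∧ j ≤ k ∧ (ℜ x : A) + k ≤ algebraMap ℝ A t ∧
    r = ‖f‖ * t - (f j).re}

noncomputable def majorant (f : A →L[ℂ] ℂ) (x : A) : ℝ := sInf (majorantValues f x)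

variable {f : A →L[ℂ] ℂ}

lemma mul_norm_realPart_mem_majorantValues (x : A) :
    ‖f‖ * ‖(ℜ x : A)‖ ∈ majorantValues f x :=
  ⟨‖(ℜ x : A)‖, norm_nonneg _, 0, 0, by simp, le_rfl,
    by simpa using (ℜ x).2.le_algebraMap_norm_self, by simp⟩

lemma majorantValues_nonempty (x : A) : (majorantValues f x).Nonempty :=
  ⟨_, mul_norm_realPart_mem_majorantValues x⟩

lemma neg_mul_norm_le_of_mem_majorantValues {x : A} {r : ℝ} (hr : r ∈ majorantValues f x) :
    -(‖f‖ * ‖x‖) ≤ r := by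
  obtain ⟨t, ht, j, k, hkj, hjk, hxk, rfl⟩ := hr
  have hk : k ≤ algebraMap ℝ A (t + ‖(ℜ x : A)‖) :=
    calc k ≤ algebraMap ℝ A t - ℜ x := le_sub_iff_add_le'.2 hxk
      _ ≤ algebraMap ℝ A t + algebraMap ℝ A ‖(ℜ x : A)‖ := by
        rw [sub_eq_add_neg]; gcongr; exact neg_le.1 (ℜ x).2.neg_algebraMap_norm_le_self
      _ = _ := (map_add _ _ _).symm
  have hj : ‖j‖ ≤ t + ‖(ℜ x : A)‖ :=
    norm_le_of_neg_algebraMap_le_of_le_algebraMap (by positivity)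
      ((neg_le_neg hk).trans hkj) (hjk.trans hk)
  have hfj : (f j).re ≤ ‖f‖ * (t + ‖(ℜ x : A)‖) :=
    (Complex.re_le_norm _).trans ((f.le_opNorm j).trans (by gcongr))
  have hfx : ‖f‖ * ‖(ℜ x : A)‖ ≤ ‖f‖ * ‖x‖ := by gcongr; exact realPart.norm_le x
  linarith

lemma bddBelow_majorantValues (x : A) : BddBelow (majorantValues f x) :=
  ⟨_, fun _ ↦ neg_mul_norm_le_of_mem_majorantValues⟩

lemma majorant_le {x : A} {r : ℝ} (hr : r ∈ majorantValues f x) : majorant f x ≤ r :=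
  csInf_le (bddBelow_majorantValues x) hr

lemma add_majorantValues_subset (x y : A) :
    majorantValues f x + majorantValues f y ⊆ majorantValues f (x + y) := by
  rintro _ ⟨_, ⟨t₁, ht₁, j₁, k₁, hkj₁, hjk₁, hx, rfl⟩, _, ⟨t₂, ht₂, j₂, k₂, hkj₂, hjk₂, hy, rfl⟩,
    rfl⟩
  refine ⟨t₁ + t₂, add_nonneg ht₁ ht₂, j₁ + j₂, k₁ + k₂,
    by simpa [neg_add_rev, add_comm] using add_le_add hkj₁ hkj₂, add_le_add hjk₁ hjk₂, ?_,
    by simp only [map_add, Complex.add_re]; ring⟩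
  simpa [add_add_add_comm] using add_le_add hx hy

lemma majorant_add_le (x y : A) : majorant f (x + y) ≤ majorant f x + majorant f y := by
  rw [majorant, majorant, majorant, ← csInf_add (majorantValues_nonempty x)
    (bddBelow_majorantValues x) (majorantValues_nonempty y) (bddBelow_majorantValues y)]
  exact csInf_le_csInf (bddBelow_majorantValues _)
    ((majorantValues_nonempty x).add (majorantValues_nonempty y)) (add_majorantValues_subset x y)

lemma smul_majorantValues_subset {c : ℝ} (hc : 0 ≤ c) (x : A) :
    c • majorantValues f x ⊆ majorantValues f (c • x) := by
  rintro _ ⟨_, ⟨t, ht, j, k, hkj, hjk, hxk, rfl⟩, rfl⟩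
  refine ⟨c * t, mul_nonneg hc ht, c • j, c • k,
    by simpa using smul_le_smul_of_nonneg_left hkj hc, smul_le_smul_of_nonneg_left hjk hc, ?_,
    by simp; ring⟩
  simpa [Algebra.algebraMap_eq_smul_one, smul_smul] using smul_le_smul_of_nonneg_left hxk hc

lemma majorantValues_smul {c : ℝ} (hc : 0 < c) (x : A) :
    majorantValues f (c • x) = c • majorantValues f x := by
  refine subset_antisymm ?_ (smul_majorantValues_subset hc.le x)
  calc majorantValues f (c • x) = c • c⁻¹ • majorantValues f (c • x) :=
        (smul_inv_smul₀ hc.ne' _).symm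
    _ ⊆ c • majorantValues f (c⁻¹ • c • x) :=
        Set.smul_set_mono (smul_majorantValues_subset (inv_nonneg.2 hc.le) _)
    _ = c • majorantValues f x := by rw [inv_smul_smul₀ hc.ne']

lemma majorant_smul {c : ℝ} (hc : 0 < c) (x : A) : majorant f (c • x) = c * majorant f x := by
  rw [majorant, majorantValues_smul hc, Real.sInf_smul_of_nonneg hc.le, smul_eq_mul, majorant]

lemma majorant_le_norm_mul (x : A) : majorant f x ≤ ‖f‖ * ‖x‖ :=
  (majorant_le (mul_norm_realPart_mem_majorantValues x)).trans
    (by gcongr; exact realPart.norm_le x)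

lemma majorant_one_le : majorant f 1 ≤ ‖f‖ :=
  majorant_le ⟨1, zero_le_one, 0, 0, by simp, le_rfl, by simp, by simp⟩

lemma majorant_neg_le {h j : A} (hh : IsSelfAdjoint h) (hhj : -h ≤ j) (hjh : j ≤ h) :
    majorant f (-h) ≤ -(f j).re :=
  majorant_le ⟨0, le_rfl, j, h, hhj, hjh, by simp [hh.coe_realPart], by simp⟩

lemma majorant_I_smul_le {h : A} (hh : IsSelfAdjoint h) : majorant f (Complex.I • h) ≤ 0 :=
  majorant_le ⟨0, le_rfl, 0, 0, by simp, le_rfl, by simp [realPart_I_smul, hh.imaginaryPart],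
    by simp⟩

variable (f) in
lemma exists_linearMap_le_majorant : ∃ ψ : A →ₗ[ℝ] ℝ, ∀ x, ψ x ≤ majorant f x := by
  obtain ⟨ψ, -, hψ⟩ := exists_extension_of_le_sublinear ⟨⊥, 0⟩ (majorant f)
    (fun _ hc x ↦ majorant_smul hc x) majorant_add_le fun ⟨x, hx⟩ ↦ by
      obtain rfl : x = 0 := (Submodule.mem_bot ℝ).1 hx
      exact le_csInf (majorantValues_nonempty 0) fun r hr ↦ by
        simpa using neg_mul_norm_le_of_mem_majorantValues hr
  exact ⟨ψ, hψ⟩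

theorem exists_dominating_functional (hf : IsHermitianFunctional f) :
    ∃ φ : A →L[ℂ] ℂ, (∀ h, 0 ≤ h → f h ≤ φ h ∧ -f h ≤ φ h) ∧ φ 1 ≤ ‖f‖ := by
  obtain ⟨ψ, hψ⟩ := exists_linearMap_le_majorant f
  have hψ_bound (x : A) : ‖ψ x‖ ≤ ‖f‖ * ‖x‖ := by
    have := (hψ (-x)).trans (majorant_le_norm_mul (-x))
    rw [map_neg, norm_neg] at this
    exact abs_le.2 ⟨by linarith, (hψ x).trans (majorant_le_norm_mul x)⟩
  have hψ_I_smul {h : A} (hh : IsSelfAdjoint h) : ψ (Complex.I • h) = 0 := by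
    have := (hψ _).trans (majorant_I_smul_le hh.neg)
    rw [smul_neg, map_neg] at this
    exact le_antisymm ((hψ _).trans (majorant_I_smul_le hh)) (by linarith)
  let φ : A →L[ℂ] ℂ := StrongDual.extendRCLike (ψ.mkContinuous ‖f‖ hψ_bound)
  have hφ {h : A} (hh : IsSelfAdjoint h) : φ h = ψ h := by
    simp [φ, StrongDual.extendRCLike_apply, hψ_I_smul hh]
  refine ⟨φ, fun h hh ↦ ?_, by rw [hφ (.one A)]; exact_mod_cast (hψ 1).trans majorant_one_le⟩
  have hsa := IsSelfAdjoint.of_nonneg hh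
  have h₁ := (hψ (-h)).trans (majorant_neg_le hsa (neg_le_self hh) le_rfl)
  have h₂ := (hψ (-h)).trans (majorant_neg_le hsa le_rfl (neg_le_self hh))
  simp only [map_neg, Complex.neg_re, neg_neg, neg_le_neg_iff] at h₁ h₂
  rw [hφ hsa, ← hf.ofReal_re_apply hsa]
  exact ⟨mod_cast h₁, mod_cast neg_le.1 h₂⟩

end JordanDecomposition

open JordanDecomposition in
theorem exists_jordan_decomposition {f : A →L[ℂ] ℂ} (hf : IsHermitianFunctional f) :
    ∃ f₁ f₂ : A →L[ℂ] ℂ, IsPosFunctional f₁ ∧ IsPosFunctional f₂ ∧ f = f₁ - f₂ ∧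
      f₁ 1 + f₂ 1 = ‖f‖ := by
  obtain ⟨φ, hφf, hφ1⟩ := exists_dominating_functional hf
  have h₁ : IsPosFunctional ((2 : ℂ)⁻¹ • (φ + f)) := fun h hh ↦
    mul_nonneg (by norm_num [Complex.le_def]) (neg_le_iff_add_nonneg.1 (hφf h hh).2)
  have h₂ : IsPosFunctional ((2 : ℂ)⁻¹ • (φ - f)) := fun h hh ↦
    mul_nonneg (by norm_num [Complex.le_def]) (sub_nonneg.2 (hφf h hh).1)
  have hf₁₂ : f = (2 : ℂ)⁻¹ • (φ + f) - (2 : ℂ)⁻¹ • (φ - f) := by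
    ext x; simp; ring
  have hsum : ((2 : ℂ)⁻¹ • (φ + f)) 1 + ((2 : ℂ)⁻¹ • (φ - f)) 1 = φ 1 := by
    simp; ring
  refine ⟨_, _, h₁, h₂, hf₁₂, hsum ▸ le_antisymm hφ1 ?_⟩
  simpa only [← hf₁₂, hsum] using norm_sub_le_apply_one_add h₁ h₂

/-- For a hermitian continuous linear functional `f` on a unital C*-algebra,
`‖f‖ = r_1(f)`. -/
theorem norm_eq_rSeminorm_one (f : A →L[ℂ] ℂ) (hf : IsHermitianFunctional f) :
    ‖f‖ = rSeminorm (1 : A) f := by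
  obtain ⟨f₁, f₂, h₁, h₂, hf₁₂, h1⟩ := exists_jordan_decomposition hf
  refine (IsLeast.csInf_eq ⟨?_, ?_⟩).symm
  · exact ⟨f₁, f₂, h₁, h₂, hf₁₂, h1.symm⟩
  · rintro r ⟨g₁, g₂, hg₁, hg₂, rfl, hr⟩
    exact_mod_cast hr ▸ norm_sub_le_apply_one_add hg₁ hg₂
end

section
/- Let A be a unital C*-algebra and a ∈ A a positive element. The seminorm r_a is faithful on hermitian continuous linear functionals (i.e., r_a(f) = 0 implies f = 0 for every hermitian continuous linear functional f) if and only if f(a) > 0 for every nonzero positive continuous linear functional f on A. -/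
open scoped ComplexOrder NNReal

variable {A : Type*} [CStarAlgebra A] [PartialOrder A] [StarOrderedRing A]

/-!
Positive functionals are hermitian and satisfy `‖g‖ ≤ 4 Re g(1)`, and by the M. Riesz extension
theorem every hermitian functional is a difference of two positive ones, so `r_a(f)` is an
infimum over a nonempty set. If `g(a) > 0` for every nonzero positive `g`, weak-* compactness of
the state space gives `c > 0` with `c Re g(1) ≤ Re g(a)` for all positive `g`, whence
`r_a(f) ≥ (c/4) ‖f‖`. Conversely, a nonzero positive `g` with `g(a) = 0` has `r_a(g) = 0`,
witnessed by `g = g - 0`.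
-/

open scoped ComplexStarModule

section Domination

variable {E : Type*} [NormedAddCommGroup E] [NormedSpace ℝ E]

def dominationCone (P : PointedCone ℝ E) (φ : E →ₗ[ℝ] ℝ) {M : ℝ} (hM : 0 ≤ M) :
    PointedCone ℝ (E × ℝ) where
  carrier := {p | ∃ k₁ ∈ P, ∃ k₂ ∈ P, p.2 ≤ φ k₁ - M * ‖p.1 - (k₁ + k₂)‖}
  zero_mem' := ⟨0, P.zero_mem, 0, P.zero_mem, by simp⟩
  add_mem' := by
    rintro ⟨x, s⟩ ⟨y, t⟩ ⟨k₁, hk₁, k₂, hk₂, hs⟩ ⟨l₁, hl₁, l₂, hl₂, ht⟩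
    refine ⟨k₁ + l₁, P.add_mem hk₁ hl₁, k₂ + l₂, P.add_mem hk₂ hl₂, ?_⟩
    have hnorm : ‖x + y - (k₁ + l₁ + (k₂ + l₂))‖ ≤ ‖x - (k₁ + k₂)‖ + ‖y - (l₁ + l₂)‖ := by
      rw [show x + y - (k₁ + l₁ + (k₂ + l₂)) = (x - (k₁ + k₂)) + (y - (l₁ + l₂)) by abel]
      exact norm_add_le _ _
    simp only [Prod.fst_add, Prod.snd_add, map_add] at hs ht ⊢
    nlinarith
  smul_mem' := by
    rintro c ⟨x, s⟩ ⟨k₁, hk₁, k₂, hk₂, hs⟩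
    refine ⟨c • k₁, P.smul_mem c.2 hk₁, c • k₂, P.smul_mem c.2 hk₂, ?_⟩
    show (c : ℝ) * s ≤ φ ((c : ℝ) • k₁) - M * ‖(c : ℝ) • x - ((c : ℝ) • k₁ + (c : ℝ) • k₂)‖
    rw [map_smul, ← smul_add, ← smul_sub, norm_smul, Real.norm_of_nonneg c.2, smul_eq_mul]
    nlinarith [c.2]

/-- `G` is `x ↦ g (x, 0)` for a positive extension `g` of `(0, s) ↦ -s` to `dominationCone`:
the cone contains `(k, 0)` and `(k, φ k)` for `k ∈ P`, and the normality of `P` keeps `(0, 1)`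
out of it. -/
theorem PointedCone.exists_nonneg_ge_of_le_mul_norm (P : PointedCone ℝ E)
    (hP : ∀ k₁ ∈ P, ∀ k₂ ∈ P, ‖k₁‖ ≤ ‖k₁ + k₂‖) (φ : E →ₗ[ℝ] ℝ) {M : ℝ} (hM : 0 ≤ M)
    (hφ : ∀ k ∈ P, φ k ≤ M * ‖k‖) :
    ∃ G : E →ₗ[ℝ] ℝ, ∀ k ∈ P, 0 ≤ G k ∧ φ k ≤ G k := by
  have hne : ((0 : E), (1 : ℝ)) ≠ 0 := by simp
  let Φ : (E × ℝ) →ₗ.[ℝ] ℝ := LinearPMap.mkSpanSingleton ((0 : E), (1 : ℝ)) (-1) hne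
  have hΦ : ∀ x : Φ.domain, ∃ c : ℝ, (x : E × ℝ) = (0, c) ∧ Φ x = -c := by
    rintro ⟨x, hx⟩
    obtain ⟨c, rfl⟩ := Submodule.mem_span_singleton.mp hx
    exact ⟨c, by simp, (LinearPMap.mkSpanSingleton'_apply _ _ _ c hx).trans (by simp)⟩
  have hnonneg : ∀ x : Φ.domain, (x : E × ℝ) ∈ dominationCone P φ hM → 0 ≤ Φ x := by
    intro x hx
    obtain ⟨c, hxc, hΦx⟩ := hΦ x
    obtain ⟨k₁, hk₁, k₂, hk₂, hc⟩ := hxc ▸ hx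
    have hφk₁ := hφ k₁ hk₁
    have hk₁_le := hP k₁ hk₁ k₂ hk₂
    simp only [zero_sub, norm_neg] at hc
    rw [hΦx]
    nlinarith
  have hdense : ∀ p, ∃ x : Φ.domain, (x : E × ℝ) + p ∈ dominationCone P φ hM := by
    rintro ⟨x, s⟩
    refine ⟨⟨(-M * ‖x‖ - s) • ((0 : E), (1 : ℝ)), Submodule.smul_mem _ _
      (Submodule.mem_span_singleton_self _)⟩, 0, P.zero_mem, 0, P.zero_mem, ?_⟩
    simp
  obtain ⟨g, hgΦ, hg⟩ := riesz_extension (dominationCone P φ hM) Φ hnonneg hdense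
  have hg1 : g (0, 1) = -1 :=
    (hgΦ ⟨_, Submodule.mem_span_singleton_self _⟩).trans
      (LinearPMap.mkSpanSingleton_apply ℝ ℝ hne _)
  have hg_apply : ∀ x s, g (x, s) = g (x, 0) - s := by
    intro x s
    rw [show ((x, s) : E × ℝ) = (x, 0) + s • (0, 1) by simp, map_add, map_smul, hg1,
      smul_eq_mul]
    ring
  refine ⟨g.comp (LinearMap.inl ℝ E ℝ), fun k hk => ⟨?_, ?_⟩⟩
  · simpa using hg (k, 0) ⟨0, P.zero_mem, k, hk, by simp⟩
  · have hgk := hg (k, φ k) ⟨k, hk, 0, P.zero_mem, by simp⟩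
    rw [hg_apply] at hgk
    simpa using hgk

end Domination

namespace IsPosFunctional

variable {f : A →L[ℂ] ℂ}

noncomputable def toPositiveLinearMap (hf : IsPosFunctional f) : A →ₚ[ℂ] ℂ :=
  PositiveLinearMap.mk₀ f.toLinearMap hf

lemma re_apply_nonneg (hf : IsPosFunctional f) {x : A} (hx : 0 ≤ x) : 0 ≤ (f x).re :=
  (Complex.nonneg_iff.mp (hf x hx)).1

lemma ofReal_re_apply (hf : IsPosFunctional f) {x : A} (hx : 0 ≤ x) : ((f x).re : ℂ) = f x :=
  (Complex.eq_re_of_ofReal_le (by exact_mod_cast hf x hx)).symm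

lemma smul (hf : IsPosFunctional f) {t : ℝ} (ht : 0 ≤ t) : IsPosFunctional (t • f) :=
  fun x hx => smul_nonneg ht (hf x hx)

lemma isHermitian (hf : IsPosFunctional f) : IsHermitianFunctional f := by
  intro x
  have hre := (IsSelfAdjoint.map' (ℜ x).property hf.toPositiveLinearMap).star_eq
  have him := (IsSelfAdjoint.map' (ℑ x).property hf.toPositiveLinearMap).star_eq
  change star (f _) = f _ at hre him
  conv_lhs => rw [← realPart_add_I_smul_imaginaryPart x, star_add, star_smul,
    (ℜ x).property.star_eq, (ℑ x).property.star_eq]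
  conv_rhs => rw [← realPart_add_I_smul_imaginaryPart x]
  simp [← Complex.star_def, hre, him]

/-- Split `x` into four positive parts of norm at most `‖x‖`. -/
lemma norm_le_s2 (hf : IsPosFunctional f) : ‖f‖ ≤ 4 * (f 1).re := by
  have h1 : ‖f 1‖ = (f 1).re := (Complex.re_eq_norm.mpr (hf 1 zero_le_one)).symm
  refine f.opNorm_le_bound (by linarith [hf.re_apply_nonneg zero_le_one]) fun x => ?_
  obtain ⟨y, hy_nonneg, hy_norm, hy⟩ := CStarAlgebra.exists_sum_four_nonneg x
  calc ‖f x‖ ≤ ∑ i : Fin 4, ‖f (y i)‖ := by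
        rw [hy, map_sum]
        refine (norm_sum_le _ _).trans (le_of_eq (Finset.sum_congr rfl fun i _ => ?_))
        simp
    _ ≤ ∑ _i : Fin 4, (f 1).re * ‖x‖ := by
        gcongr with i
        rw [← h1]
        exact (hf.toPositiveLinearMap.norm_apply_le_of_nonneg _ (hy_nonneg i)).trans
          (mul_le_mul_of_nonneg_left (hy_norm i) (norm_nonneg _))
    _ = 4 * (f 1).re * ‖x‖ := by
        simp only [Finset.sum_const, Finset.card_univ, Fintype.card_fin, nsmul_eq_mul,
          Nat.cast_ofNat]
        ring

lemma re_apply_one_pos (hf : IsPosFunctional f) (hne : f ≠ 0) : 0 < (f 1).re := by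
  refine (hf.re_apply_nonneg zero_le_one).lt_of_ne fun h => hne ?_
  exact norm_le_zero_iff.mp (hf.norm_le_s2.trans (by rw [← h, mul_zero]))

end IsPosFunctional

theorem IsHermitianFunctional.exists_eq_sub {f : A →L[ℂ] ℂ} (hf : IsHermitianFunctional f) :
    ∃ f₁ f₂ : A →L[ℂ] ℂ, IsPosFunctional f₁ ∧ IsPosFunctional f₂ ∧ f = f₁ - f₂ := by
  obtain ⟨G, hG⟩ := (PointedCone.positive ℝ A).exists_nonneg_ge_of_le_mul_norm
    (fun k₁ hk₁ _ hk₂ => CStarAlgebra.norm_le_norm_of_nonneg_of_le hk₁ (le_add_of_nonneg_right hk₂))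
    (Complex.reLm ∘ₗ f.toLinearMap.restrictScalars ℝ) (norm_nonneg f)
    (fun k _ => (Complex.re_le_norm _).trans (f.le_opNorm k))
  -- `F x = G (ℜ x) + i G (ℑ x)`
  let F : A →ₗ[ℂ] ℂ :=
    Module.Dual.extendRCLike (G ∘ₗ (selfAdjoint.submodule ℝ A).subtype ∘ₗ realPart)
  have hF : ∀ x : A, IsSelfAdjoint x → F x = G x := by
    intro x hx
    rw [Module.Dual.extendRCLike_apply]
    change ((G (ℜ x : A) : ℂ) - Complex.I * (G (ℜ (Complex.I • x) : A))) = G x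
    simp [realPart_I_smul, hx.imaginaryPart, hx.coe_realPart]
  have hFpos : ∀ x, 0 ≤ x → 0 ≤ F x := fun x hx => by
    rw [hF x (.of_nonneg hx)]
    exact_mod_cast (hG x hx).1
  -- positive linear maps between C⋆-algebras are automatically continuous
  let f₁ : A →L[ℂ] ℂ := ⟨F, map_continuous (PositiveLinearMap.mk₀ F hFpos)⟩
  refine ⟨f₁, f₁ - f, hFpos, fun x hx => ?_, (sub_sub_cancel _ _).symm⟩
  have hfx : ((f x).re : ℂ) = f x :=
    Complex.conj_eq_iff_re.mp ((IsSelfAdjoint.of_nonneg hx).star_eq ▸ hf x).symm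
  change 0 ≤ F x - f x
  rw [hF x (.of_nonneg hx), ← hfx, ← Complex.ofReal_sub]
  exact_mod_cast sub_nonneg.mpr (hG x hx).2

variable (A) in
def stateSpace : Set (WeakDual ℂ A) :=
  {g | IsPosFunctional (WeakDual.toStrongDual g) ∧ g 1 = 1}

lemma isCompact_stateSpace : IsCompact (stateSpace A) := by
  have hclosed : IsClosed (stateSpace A) := by
    refine IsClosed.inter ?_ (isClosed_eq (WeakDual.eval_continuous 1) continuous_const)
    show IsClosed {g : WeakDual ℂ A | ∀ x : A, 0 ≤ x → 0 ≤ g x}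
    simp only [Set.ofPred_forall]
    exact isClosed_iInter fun x => isClosed_iInter fun _ =>
      isClosed_le continuous_const (WeakDual.eval_continuous x)
  refine (WeakDual.isCompact_closedBall (𝕜 := ℂ) 0 4).of_isClosed_subset hclosed fun g hg => ?_
  have hnorm := hg.1.norm_le_s2
  rw [show (WeakDual.toStrongDual g) 1 = 1 from hg.2] at hnorm
  simpa using hnorm

theorem exists_pos_mul_re_apply_one_le {a : A}
    (h : ∀ g : A →L[ℂ] ℂ, IsPosFunctional g → g ≠ 0 → 0 < g a) :
    ∃ c : ℝ, 0 < c ∧ ∀ g : A →L[ℂ] ℂ, IsPosFunctional g → c * (g 1).re ≤ (g a).re := by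
  obtain ⟨c, hc, hcS⟩ := isCompact_stateSpace.exists_forall_le'
    (Complex.continuous_re.comp (WeakDual.eval_continuous a)).continuousOn
    fun g hg => (Complex.lt_def.mp
      (h _ hg.1 fun h0 => by simpa using hg.2.symm.trans (DFunLike.congr_fun h0 1))).1
  refine ⟨c, hc, fun g hg => ?_⟩
  rcases eq_or_ne g 0 with rfl | hne
  · simp
  set t := (g 1).re
  have ht := hg.re_apply_one_pos hne
  have hstate : StrongDual.toWeakDual (t⁻¹ • g) ∈ stateSpace A := by
    refine ⟨hg.smul (inv_nonneg.mpr ht.le), ?_⟩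
    show t⁻¹ • g 1 = 1
    rw [← hg.ofReal_re_apply zero_le_one, Complex.real_smul, ← Complex.ofReal_mul,
      inv_mul_cancel₀ ht.ne', Complex.ofReal_one]
  have hmin := hcS _ hstate
  change c ≤ (t⁻¹ • g a).re at hmin
  rw [Complex.smul_re, smul_eq_mul, le_inv_mul_iff₀ ht] at hmin
  linarith

lemma rSeminorm_eq_zero_of_apply_eq_zero {a : A} (ha : 0 ≤ a) {f : A →L[ℂ] ℂ}
    (hf : IsPosFunctional f) (hfa : f a = 0) : rSeminorm a f = 0 := by
  have hmem : (0 : ℝ) ∈ {r : ℝ | ∃ f₁ f₂ : A →L[ℂ] ℂ, IsPosFunctional f₁ ∧ IsPosFunctional f₂ ∧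
      f = f₁ - f₂ ∧ (r : ℂ) = f₁ a + f₂ a} :=
    ⟨f, 0, hf, fun _ _ => le_rfl, (sub_zero f).symm, by simp [hfa]⟩
  refine le_antisymm (csInf_le ⟨0, ?_⟩ hmem) (le_csInf ⟨0, hmem⟩ ?_) <;>
  · rintro r ⟨f₁, f₂, hf₁, hf₂, -, hr⟩
    have hr' : r = (f₁ a).re + (f₂ a).re := by simpa using congrArg Complex.re hr
    linarith [hf₁.re_apply_nonneg ha, hf₂.re_apply_nonneg ha]

lemma mul_norm_le_rSeminorm {a : A} (ha : 0 ≤ a) {f : A →L[ℂ] ℂ} (hf : IsHermitianFunctional f)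
    {c : ℝ} (hc : 0 ≤ c) (hca : ∀ g : A →L[ℂ] ℂ, IsPosFunctional g → c * (g 1).re ≤ (g a).re) :
    c / 4 * ‖f‖ ≤ rSeminorm a f := by
  obtain ⟨f₁, f₂, hf₁, hf₂, hf₁₂⟩ := hf.exists_eq_sub
  refine le_csInf ⟨(f₁ a).re + (f₂ a).re, f₁, f₂, hf₁, hf₂, hf₁₂, ?_⟩ ?_
  · push_cast
    rw [hf₁.ofReal_re_apply ha, hf₂.ofReal_re_apply ha]
  rintro r ⟨g₁, g₂, hg₁, hg₂, rfl, hr⟩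
  have hr' : r = (g₁ a).re + (g₂ a).re := by simpa using congrArg Complex.re hr
  calc c / 4 * ‖g₁ - g₂‖ ≤ c / 4 * (4 * (g₁ 1).re + 4 * (g₂ 1).re) := by
        gcongr
        exact (norm_sub_le g₁ g₂).trans (add_le_add hg₁.norm_le_s2 hg₂.norm_le_s2)
    _ = c * (g₁ 1).re + c * (g₂ 1).re := by ring
    _ ≤ r := hr' ▸ add_le_add (hca g₁ hg₁) (hca g₂ hg₂)

/-- The seminorm `r_a` is faithful on hermitian functionals iff `f(a) > 0` for every
nonzero positive continuous linear functional `f`. -/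
theorem rSeminorm_faithful_iff (a : A) (ha : 0 ≤ a) :
    (∀ f : A →L[ℂ] ℂ, IsHermitianFunctional f → rSeminorm a f = 0 → f = 0) ↔
      (∀ f : A →L[ℂ] ℂ, IsPosFunctional f → f ≠ 0 → 0 < f a) := by
  refine ⟨fun H g hg hne => ?_, fun H f hf hf0 => ?_⟩
  · refine (hg a ha).lt_of_ne fun hga => hne ?_
    exact H g hg.isHermitian (rSeminorm_eq_zero_of_apply_eq_zero ha hg hga.symm)
  · obtain ⟨c, hc, hca⟩ := exists_pos_mul_re_apply_one_le H
    have hbound := mul_norm_le_rSeminorm ha hf hc.le hca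
    rw [hf0] at hbound
    exact norm_le_zero_iff.mp (nonpos_of_mul_nonpos_right hbound (by positivity))
end

section
/- Let A be a unital C*-algebra, a ∈ A a positive element, and let α, β be real numbers with 0 < α < β. Then for every hermitian continuous linear functional f on A, r_{a^β}(f) ≤ ‖a^{β−α}‖ · r_{a^α}(f), where a^γ denotes the real power of the positive element a defined by continuous functional calculus. -/
open scoped ComplexOrder NNReal

variable {A : Type*} [CStarAlgebra A] [PartialOrder A] [StarOrderedRing A]

/-! For `x` in the spectrum of `a`, `x ^ (β - α)` lies in the spectrum of `a ^ (β - α)`, so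
`x ^ β ≤ ‖a ^ (β - α)‖ * x ^ α` there, and the functional calculus gives the operator inequality
`a ^ β ≤ ‖a ^ (β - α)‖ • a ^ α`. Positive functionals are monotone, so each decomposition
`f = f₁ - f₂` contributes to `r_{a^β}(f)` at most `‖a ^ (β - α)‖` times its contribution to
`r_{a^α}(f)`; taking infima gives the inequality. -/

lemma CFC.rpow_le_norm_rpow_sub_smul_rpow {a : A} (ha : 0 ≤ a) {α β : ℝ} (hα : 0 < α)
    (hαβ : α < β) : a ^ β ≤ ‖a ^ (β - α)‖ • a ^ α := by
  nontriviality A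
  have hcont : ∀ γ : ℝ, 0 ≤ γ → ContinuousOn (fun x : ℝ≥0 => x ^ γ) (spectrum ℝ≥0 a) :=
    fun γ hγ => NNReal.continuousOn_rpow_const (Or.inr hγ)
  rw [← coe_nnnorm, ← NNReal.smul_def, CFC.rpow_def, CFC.rpow_def (y := α),
    ← cfc_smul (‖a ^ (β - α)‖₊) (fun x : ℝ≥0 => x ^ α) a (hcont α hα.le)]
  refine cfc_mono (fun x hx => ?_) (hcont β (by linarith))
    ((hcont α hα.le).const_smul (‖a ^ (β - α)‖₊))
  have hmem : x ^ (β - α) ∈ spectrum ℝ≥0 (a ^ (β - α)) := by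
    rw [CFC.spectrum_rpow a _ (hcont _ (by linarith))]
    exact ⟨x, hx, rfl⟩
  calc x ^ β = x ^ (β - α) * x ^ α := by
        rw [← NNReal.rpow_add' (by linarith), sub_add_cancel]
    _ ≤ ‖a ^ (β - α)‖₊ * x ^ α := by gcongr; exact spectrum.le_nnnorm_of_mem hmem

lemma IsPosFunctional.im_eq_zero {g : A →L[ℂ] ℂ} (hg : IsPosFunctional g) {x : A} (hx : 0 ≤ x) :
    (g x).im = 0 :=
  ((Complex.nonneg_iff.mp (hg x hx)).2).symm

lemma IsPosFunctional.re_mono {g : A →L[ℂ] ℂ} (hg : IsPosFunctional g) {x y : A} (hxy : x ≤ y) :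
    (g x).re ≤ (g y).re := by
  have h := hg (y - x) (sub_nonneg.mpr hxy)
  rw [map_sub, sub_nonneg] at h
  exact (Complex.le_def.mp h).1

def posDecompositions (f : A →L[ℂ] ℂ) : Set ((A →L[ℂ] ℂ) × (A →L[ℂ] ℂ)) :=
  {p | IsPosFunctional p.1 ∧ IsPosFunctional p.2 ∧ f = p.1 - p.2}

lemma rSeminorm_eq_iInf {a : A} (ha : 0 ≤ a) (f : A →L[ℂ] ℂ) :
    rSeminorm a f = ⨅ p : posDecompositions f, ((p.1.1 a).re + (p.1.2 a).re) := by
  rw [rSeminorm, iInf]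
  congr 1
  ext r
  constructor
  · rintro ⟨f₁, f₂, h₁, h₂, hf, hr⟩
    exact ⟨⟨(f₁, f₂), h₁, h₂, hf⟩, by simpa using congrArg Complex.re hr.symm⟩
  · rintro ⟨⟨⟨f₁, f₂⟩, h₁, h₂, hf⟩, rfl⟩
    refine ⟨f₁, f₂, h₁, h₂, hf, Complex.ext ?_ ?_⟩ <;>
      simp [h₁.im_eq_zero ha, h₂.im_eq_zero ha]

lemma rSeminorm_le_mul_of_le_smul {a b : A} (ha : 0 ≤ a) (hb : 0 ≤ b) {c : ℝ} (hc : 0 ≤ c)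
    (hba : b ≤ c • a) (f : A →L[ℂ] ℂ) : rSeminorm b f ≤ c * rSeminorm a f := by
  rw [rSeminorm_eq_iInf hb, rSeminorm_eq_iInf ha, Real.mul_iInf_of_nonneg hc]
  refine ciInf_mono ⟨0, ?_⟩ fun ⟨⟨f₁, f₂⟩, h₁, h₂, _⟩ => ?_
  · rintro _ ⟨⟨⟨f₁, f₂⟩, h₁, h₂, _⟩, rfl⟩
    exact add_nonneg ((Complex.nonneg_iff.mp (h₁ b hb)).1) ((Complex.nonneg_iff.mp (h₂ b hb)).1)
  · have hsmul (g : A →L[ℂ] ℂ) : (g (c • a)).re = c * (g a).re := by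
      rw [g.map_smul_of_tower, Complex.smul_re, smul_eq_mul]
    calc (f₁ b).re + (f₂ b).re ≤ (f₁ (c • a)).re + (f₂ (c • a)).re :=
          add_le_add (h₁.re_mono hba) (h₂.re_mono hba)
      _ = c * ((f₁ a).re + (f₂ a).re) := by rw [hsmul, hsmul, mul_add]

theorem rSeminorm_rpow_le_general (a : A) (ha : 0 ≤ a) (α β : ℝ) (hα : 0 < α) (hαβ : α < β)
    (f : A →L[ℂ] ℂ) :
    rSeminorm (a ^ β) f ≤ ‖a ^ (β - α)‖ * rSeminorm (a ^ α) f :=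
  rSeminorm_le_mul_of_le_smul CFC.rpow_nonneg CFC.rpow_nonneg (norm_nonneg _)
    (CFC.rpow_le_norm_rpow_sub_smul_rpow ha hα hαβ) f

/-- For `0 < α < β` and hermitian `f`, `r_{a^β}(f) ≤ ‖a^{β-α}‖ * r_{a^α}(f)`. -/
theorem rSeminorm_rpow_le (a : A) (ha : 0 ≤ a) (α β : ℝ) (hα : 0 < α) (hαβ : α < β)
    (f : A →L[ℂ] ℂ) (hf : IsHermitianFunctional f) :
    rSeminorm (a ^ β) f ≤ ‖a ^ (β - α)‖ * rSeminorm (a ^ α) f :=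
  rSeminorm_rpow_le_general a ha α β hα hαβ f
end
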